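/- Let 0 < t < 1 and let ε, ε' : Fin 3 → ℝ be sign vectors (values in {-1,1}) differing in exactly two coordinates. Then -⟨N t ε, N t ε'⟩ / √(⟨N t ε, N t ε⟩ · ⟨N t ε', N t ε'⟩) = (3 - t²)/(1 + t²), and this quantity is strictly greater than 1. In particular, the twelve pairs of negative-octet hyperplanes of the deformed configuration that were tangent in the 24-cell pull apart to a positive distance ℓ with cosh ℓ = (3 - t²)/(1 + t²) (Proposition 6.2). -/

import Mathlib

/-- The Minkowski inner product on `ℝ^{1,4}`, identified with `Fin 5 → ℝ`. -/
noncomputable def mink (v w : Fin 5 → ℝ) : ℝ :=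
  -(v 0 * w 0) + v 1 * w 1 + v 2 * w 2 + v 3 * w 3 + v 4 * w 4

/-- The positive octet space-like vectors of the deformed 24-cell (Table 6.1). -/
noncomputable def Pvec (t : ℝ) (ε : Fin 3 → ℝ) : Fin 5 → ℝ :=
  ![Real.sqrt 2, ε 0, ε 1, ε 2, (ε 0 * ε 1 * ε 2) / t]

/-- The negative octet space-like vectors of the deformed 24-cell (Table 6.1). -/
noncomputable def Nvec (t : ℝ) (ε : Fin 3 → ℝ) : Fin 5 → ℝ :=
  ![Real.sqrt 2, ε 0, ε 1, ε 2, -((ε 0 * ε 1 * ε 2) * t)]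

/-!
Both wall vectors have Minkowski norm `1 + t²`, and
`⟨N t ε, N t ε'⟩ = -2 + ∑ ε i ε' i + (∏ ε i ε' i) t²`. Each coordinate where the signs differ
contributes `-1` instead of `1` to the sum and a factor `-1` to the product, so two differing
coordinates give `t² - 3`.
-/

section SignVectors

variable {ι : Type*} {ε ε' : ι → ℝ}

lemma mul_eq_ite_of_sign (hε : ∀ i, ε i = -1 ∨ ε i = 1) (hε' : ∀ i, ε' i = -1 ∨ ε' i = 1)
    (i : ι) : ε i * ε' i = if ε i ≠ ε' i then -1 else 1 := by
  rcases hε i with h | h <;> rcases hε' i with h' | h' <;> norm_num [h, h']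

lemma sum_mul_of_sign [Fintype ι] (hε : ∀ i, ε i = -1 ∨ ε i = 1)
    (hε' : ∀ i, ε' i = -1 ∨ ε' i = 1) :
    ∑ i, ε i * ε' i = Fintype.card ι - 2 * Nat.card {i // ε i ≠ ε' i} := by
  classical
  have h (i : ι) : ε i * ε' i = 1 - 2 * if ε i ≠ ε' i then 1 else 0 := by
    rw [mul_eq_ite_of_sign hε hε' i]; split_ifs <;> norm_num
  simp only [h, Finset.sum_sub_distrib, ← Finset.mul_sum, Finset.sum_boole,
    Nat.card_eq_fintype_card, Fintype.card_subtype, Finset.sum_const, Finset.card_univ,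
    nsmul_eq_mul, mul_one]

lemma prod_mul_of_sign [Fintype ι] (hε : ∀ i, ε i = -1 ∨ ε i = 1)
    (hε' : ∀ i, ε' i = -1 ∨ ε' i = 1) :
    ∏ i, ε i * ε' i = (-1) ^ Nat.card {i // ε i ≠ ε' i} := by
  classical
  simp only [mul_eq_ite_of_sign hε hε', Finset.prod_ite, Finset.prod_const_one, mul_one,
    Finset.prod_const, Nat.card_eq_fintype_card, Fintype.card_subtype]

end SignVectors

lemma mink_Nvec (t : ℝ) (ε ε' : Fin 3 → ℝ) :
    mink (Nvec t ε) (Nvec t ε') = -2 + ∑ i, ε i * ε' i + (∏ i, ε i * ε' i) * t ^ 2 := by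
  simp only [mink, Nvec, Fin.sum_univ_three, Fin.prod_univ_three, Matrix.cons_val,
    Real.mul_self_sqrt (zero_le_two : (0 : ℝ) ≤ 2)]
  ring

lemma mink_Nvec_self (t : ℝ) {ε : Fin 3 → ℝ} (hε : ∀ i, ε i = -1 ∨ ε i = 1) :
    mink (Nvec t ε) (Nvec t ε) = 1 + t ^ 2 := by
  have hcard : Nat.card {i // ε i ≠ ε i} = 0 := by simp
  rw [mink_Nvec, sum_mul_of_sign hε hε, prod_mul_of_sign hε hε, hcard]
  norm_num

lemma mink_Nvec_of_card_ne_eq_two (t : ℝ) {ε ε' : Fin 3 → ℝ} (hε : ∀ i, ε i = -1 ∨ ε i = 1)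
    (hε' : ∀ i, ε' i = -1 ∨ ε' i = 1) (hd : Nat.card {i : Fin 3 // ε i ≠ ε' i} = 2) :
    mink (Nvec t ε) (Nvec t ε') = t ^ 2 - 3 := by
  rw [mink_Nvec, sum_mul_of_sign hε hε', prod_mul_of_sign hε hε', hd]
  norm_num
  ring

theorem negative_pair_distance (t : ℝ) (ht0 : 0 < t) (ht1 : t < 1)
    (ε ε' : Fin 3 → ℝ) (hε : ∀ i, ε i = -1 ∨ ε i = 1) (hε' : ∀ i, ε' i = -1 ∨ ε' i = 1)
    (hd : Nat.card {i : Fin 3 // ε i ≠ ε' i} = 2) :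
    -mink (Nvec t ε) (Nvec t ε') /
      Real.sqrt (mink (Nvec t ε) (Nvec t ε) * mink (Nvec t ε') (Nvec t ε')) =
      (3 - t ^ 2) / (1 + t ^ 2) ∧
    1 < (3 - t ^ 2) / (1 + t ^ 2) := by
  have hpos : 0 < 1 + t ^ 2 := by positivity
  refine ⟨?_, ?_⟩
  · rw [mink_Nvec_self t hε, mink_Nvec_self t hε', mink_Nvec_of_card_ne_eq_two t hε hε' hd,
      Real.sqrt_mul_self hpos.le, neg_sub]
  · rw [one_lt_div hpos]
    nlinarith
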